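/- arXiv:2512.02957 — 3 statements merged into one kernel-verified Lean document; each statement's English description precedes it below -/
import Mathlib

section
/- Let m ≥ 2 and define, for fixed i and k = 1,…,m−1, the vectors obtained by Gram–Schmidt orthonormalization of the sequence ((e_i + e_{i⊕1})/√2, (e_i + e_{i⊕2})/√2, …, (e_i + e_{i⊕(m−1)})/√2), where ⊕ denotes addition modulo m on indices {1,…,m}. Then the k-th orthonormalized vector equals a_{ik} = α_k (e_i − Σ_{j=1}^{k−1} e_{i⊕j}) + β_k e_{i⊕k}, with α_k = 1/√(k + k²) and β_k = √(k/(k+1)). -/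
/-!
Write `v a = e_{i⊕a}`; the `v a` with `a < m` are orthonormal. The vector
`w_k = v 0 - ∑_{j<k} v (j+1) + (k+1) v (k+1)` is orthogonal to each `v 0 + v (j+1)` with `j < k`,
and `v 0 + v (k+1) - w_k / (k+1)` is the mean of those earlier vectors. These two properties
characterize the `k`-th Gram–Schmidt vector, which is therefore `w_k / ((k+1)√2)`; normalizing with
`‖w_k‖² = (k+1)(k+2)` produces `α` and `β = (k+1) α` (the paper's `k` is `k + 1` here).
-/

open Finset
open Fin.NatCast

noncomputable def canE (m : ℕ) (i : Fin m) : EuclideanSpace ℝ (Fin m) :=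
  EuclideanSpace.single i 1

instance (n : ℕ) : WellFoundedLT (Fin n) := ⟨Finite.wellFounded_of_trans_of_irrefl _⟩

open Submodule RealInnerProductSpace InnerProductSpace

theorem InnerProductSpace.gramSchmidt_eq_of_sub_mem_span_of_inner_eq_zero
    {𝕜 E ι : Type*} [RCLike 𝕜] [NormedAddCommGroup E] [InnerProductSpace 𝕜 E]
    [LinearOrder ι] [LocallyFiniteOrderBot ι] [WellFoundedLT ι]
    {f : ι → E} {n : ι} {w : E} (hspan : f n - w ∈ span 𝕜 (f '' Set.Iio n))
    (horth : ∀ j < n, inner 𝕜 (f j) w = 0) :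
    gramSchmidt 𝕜 f n = w := by
  have hw : w ∈ (span 𝕜 (f '' Set.Iio n))ᗮ := by
    refine (isOrtho_span.mpr ?_).symm.le (mem_span_singleton_self w)
    rintro _ ⟨j, hj, rfl⟩ _ rfl
    exact horth j hj
  have hgs : gramSchmidt 𝕜 f n ∈ (span 𝕜 (f '' Set.Iio n))ᗮ := by
    rw [← span_gramSchmidt_Iio]
    refine (isOrtho_span.mpr ?_).symm.le (mem_span_singleton_self _)
    rintro _ ⟨j, hj, rfl⟩ _ rfl
    exact gramSchmidt_orthogonal 𝕜 f (ne_of_lt hj)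
  have hsub : f n - gramSchmidt 𝕜 f n ∈ span 𝕜 (f '' Set.Iio n) := by
    rw [← span_gramSchmidt_Iio, sub_eq_iff_eq_add'.mpr (gramSchmidt_def' 𝕜 f n)]
    refine sum_mem fun j hj => span_mono ?_ (coe_mem _)
    exact Set.singleton_subset_iff.mpr ⟨j, mem_Iio.mp hj, rfl⟩
  have hmem : gramSchmidt 𝕜 f n - w ∈ span 𝕜 (f '' Set.Iio n) ⊓ (span 𝕜 (f '' Set.Iio n))ᗮ :=
    ⟨by simpa using sub_mem hspan hsub, sub_mem hgs hw⟩
  rwa [inf_orthogonal_eq_bot, mem_bot, sub_eq_zero] at hmem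

theorem inv_norm_smul_smul_of_pos {F : Type*} [NormedAddCommGroup F] [NormedSpace ℝ F]
    {c : ℝ} (hc : 0 < c) (x : F) : ‖c • x‖⁻¹ • (c • x) = ‖x‖⁻¹ • x := by
  rw [norm_smul, Real.norm_of_nonneg hc.le, smul_smul, mul_inv_rev, mul_assoc,
    inv_mul_cancel₀ hc.ne', mul_one]

theorem Fin.sum_Iio_val {M : Type*} [AddCommMonoid M] {n : ℕ} (k : Fin n) (g : ℕ → M) :
    ∑ j ∈ Iio k, g j = ∑ j ∈ range k, g j := by
  rw [← Nat.Iio_eq_range, ← Fin.map_valEmbedding_Iio, sum_map]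
  rfl

theorem inv_sqrt_mul_add_one_mul_self {x : ℝ} (hx : 0 < x) :
    (√(x * (x + 1)))⁻¹ * x = √(x / (x + 1)) := by
  rw [Real.sqrt_mul hx.le, Real.sqrt_div hx.le]
  field_simp
  rw [Real.sq_sqrt hx.le]

section

variable {E : Type*} [NormedAddCommGroup E] [InnerProductSpace ℝ E]

/-- Up to the factor `((k + 1) * √2)⁻¹`, the `k`-th Gram–Schmidt vector of the family
`j ↦ (v 0 + v (j + 1)) / √2`. -/
noncomputable def starVec (v : ℕ → E) (k : ℕ) : E :=
  v 0 - ∑ j ∈ range k, v (j + 1) + ((k : ℝ) + 1) • v (k + 1)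

theorem sum_add_starVec (v : ℕ → E) (k : ℕ) :
    ∑ j ∈ range k, (v 0 + v (j + 1)) + starVec v k = ((k : ℝ) + 1) • (v 0 + v (k + 1)) := by
  rw [starVec, sum_add_distrib, sum_const, card_range]
  module

variable {v : ℕ → E} {N : ℕ}

theorem Orthonormal.inner_nat_eq_ite (hv : Orthonormal ℝ fun a : Fin N => v a) {a b : ℕ}
    (ha : a < N) (hb : b < N) : ⟪v a, v b⟫ = if a = b then 1 else 0 := by
  simpa [Fin.ext_iff] using orthonormal_iff_ite.mp hv ⟨a, ha⟩ ⟨b, hb⟩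

theorem inner_zero_sum_range (hv : Orthonormal ℝ fun a : Fin N => v a) {k : ℕ} (hk : k < N) :
    ⟪v 0, ∑ j ∈ range k, v (j + 1)⟫ = 0 := by
  rw [inner_sum]
  refine sum_eq_zero fun j hj => ?_
  rw [hv.inner_nat_eq_ite (by omega) (by simp at hj; omega), if_neg (by omega)]

theorem inner_succ_sum_range (hv : Orthonormal ℝ fun a : Fin N => v a) {a k : ℕ}
    (ha : a + 1 < N) (hk : k < N) :
    ⟪v (a + 1), ∑ j ∈ range k, v (j + 1)⟫ = if a < k then 1 else 0 := by
  have hterm : ∀ j ∈ range k, ⟪v (a + 1), v (j + 1)⟫ = if a = j then 1 else 0 := fun j hj => by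
    rw [hv.inner_nat_eq_ite ha (by simp at hj; omega)]
    simp
  simp [inner_sum, sum_congr rfl hterm]

theorem inner_zero_starVec (hv : Orthonormal ℝ fun a : Fin N => v a) {k : ℕ} (hk : k + 1 < N) :
    ⟪v 0, starVec v k⟫ = 1 := by
  rw [starVec, inner_add_right, inner_sub_right, real_inner_smul_right,
    inner_zero_sum_range hv (by omega), hv.inner_nat_eq_ite (by omega) hk,
    hv.inner_nat_eq_ite (by omega) (by omega)]
  simp

theorem inner_succ_starVec_of_lt (hv : Orthonormal ℝ fun a : Fin N => v a) {j k : ℕ}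
    (hjk : j < k) (hk : k + 1 < N) : ⟪v (j + 1), starVec v k⟫ = -1 := by
  rw [starVec, inner_add_right, inner_sub_right, real_inner_smul_right,
    inner_succ_sum_range hv (by omega) (by omega), hv.inner_nat_eq_ite (by omega) hk,
    hv.inner_nat_eq_ite (by omega) (by omega)]
  simp [hjk, hjk.ne]

theorem inner_succ_starVec_self (hv : Orthonormal ℝ fun a : Fin N => v a) {k : ℕ}
    (hk : k + 1 < N) :
    ⟪v (k + 1), starVec v k⟫ = k + 1 := by
  rw [starVec, inner_add_right, inner_sub_right, real_inner_smul_right,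
    inner_succ_sum_range hv hk (by omega), hv.inner_nat_eq_ite hk hk,
    hv.inner_nat_eq_ite hk (by omega)]
  simp

theorem norm_starVec (hv : Orthonormal ℝ fun a : Fin N => v a) {k : ℕ} (hk : k + 1 < N) :
    ‖starVec v k‖ = √(((k : ℝ) + 1) * ((k : ℝ) + 2)) := by
  have hsum : ∑ j ∈ range k, ⟪v (j + 1), starVec v k⟫ = -k := by
    rw [sum_congr rfl fun j hj => inner_succ_starVec_of_lt hv (mem_range.mp hj) hk]
    simp
  rw [norm_eq_sqrt_real_inner]
  nth_rewrite 1 [starVec]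
  rw [inner_add_left, inner_sub_left, sum_inner, real_inner_smul_left, hsum,
    inner_zero_starVec hv hk, inner_succ_starVec_self hv hk]
  ring_nf

theorem gramSchmidt_starVec (hv : Orthonormal ℝ fun a : Fin N => v a) {n : ℕ} (hn : n < N)
    {f : Fin n → E} (hf : ∀ k, f k = (√2)⁻¹ • (v 0 + v (k + 1))) (k : Fin n) :
    gramSchmidt ℝ f k = (((k : ℝ) + 1) * √2)⁻¹ • starVec v k := by
  have hk : (k : ℕ) + 1 < N := by omega
  apply gramSchmidt_eq_of_sub_mem_span_of_inner_eq_zero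
  · have hsum : ∑ j ∈ Iio k, f j = (√2)⁻¹ • ∑ j ∈ range k, (v 0 + v (j + 1)) := by
      rw [sum_congr rfl fun j _ => hf j, Fin.sum_Iio_val k fun j => (√2)⁻¹ • (v 0 + v (j + 1)),
        smul_sum]
    have hkey : f k - (((k : ℝ) + 1) * √2)⁻¹ • starVec v k =
        ((k : ℝ) + 1)⁻¹ • ∑ j ∈ Iio k, f j := by
      rw [hsum, hf k, ← sub_eq_of_eq_add (sum_add_starVec v k).symm]
      match_scalars <;> field_simp
    rw [hkey]
    exact smul_mem _ _ (sum_mem fun j hj => subset_span ⟨j, mem_Iio.mp hj, rfl⟩)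
  · intro j hj
    rw [hf j, real_inner_smul_left, real_inner_smul_right, inner_add_left,
      inner_zero_starVec hv hk, inner_succ_starVec_of_lt hv hj hk]
    ring

theorem gramSchmidtNormed_starVec (hv : Orthonormal ℝ fun a : Fin N => v a) {n : ℕ}
    (hn : n < N)
    {f : Fin n → E} (hf : ∀ k, f k = (√2)⁻¹ • (v 0 + v (k + 1))) (k : Fin n) :
    gramSchmidtNormed ℝ f k =
      (√(((k : ℕ) + 1) + ((k : ℕ) + 1) ^ 2))⁻¹ • (v 0 - ∑ j ∈ range k, v (j + 1))
        + √((((k : ℕ) + 1 : ℕ)) / (((k : ℕ) + 2 : ℕ))) • v (k + 1) := by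
  have hα : ((k : ℝ) + 1) + ((k : ℝ) + 1) ^ 2 = ((k : ℝ) + 1) * ((k : ℝ) + 1 + 1) := by ring
  have hβ : ((((k : ℕ) + 1 : ℕ) : ℝ) / (((k : ℕ) + 2 : ℕ) : ℝ)) =
      ((k : ℝ) + 1) / ((k : ℝ) + 1 + 1) := by
    push_cast; ring
  rw [gramSchmidtNormed, gramSchmidt_starVec hv hn hf, RCLike.ofReal_real_eq_id, id,
    inv_norm_smul_smul_of_pos (by positivity), norm_starVec hv (by omega), starVec, smul_add,
    smul_smul, hα, hβ, ← inv_sqrt_mul_add_one_mul_self (by positivity)]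
  ring_nf

end

theorem orthonormal_canE_add (m : ℕ) [NeZero m] (i : Fin m) :
    Orthonormal ℝ fun a : Fin m => canE m (i + ((a : ℕ) : Fin m)) := by
  simpa [canE, Function.comp_def] using
    (EuclideanSpace.orthonormal_single (𝕜 := ℝ) (ι := Fin m)).comp _ (add_right_injective i)

theorem gramSchmidt_explicit_form_general (m : ℕ) [NeZero m] (i : Fin m)
    (f : Fin (m - 1) → EuclideanSpace ℝ (Fin m))
    (hf : ∀ k : Fin (m - 1),
      f k = (Real.sqrt 2)⁻¹ • (canE m i + canE m (i + (((k : ℕ) + 1 : ℕ) : Fin m))))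
    (k : Fin (m - 1)) :
    InnerProductSpace.gramSchmidtNormed ℝ f k =
      (Real.sqrt (((k : ℕ) + 1) + ((k : ℕ) + 1) ^ 2))⁻¹ •
          (canE m i - ∑ j ∈ Finset.range (k : ℕ), canE m (i + ((j + 1 : ℕ) : Fin m)))
        + Real.sqrt ((((k : ℕ) + 1 : ℕ)) / (((k : ℕ) + 2 : ℕ))) •
          canE m (i + (((k : ℕ) + 1 : ℕ) : Fin m)) := by
  have hv0 : canE m (i + ((0 : ℕ) : Fin m)) = canE m i := by simp
  have h := gramSchmidtNormed_starVec (v := fun a : ℕ => canE m (i + (a : Fin m)))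
    (orthonormal_canE_add m i) (Nat.sub_lt (NeZero.pos m) one_pos)
    (by simpa only [hv0] using hf) k
  rwa [hv0] at h

/-- Gram–Schmidt orthonormalization of the vectors `(e_i + e_{i⊕k})/√2`, `k = 1,…,m−1`
(indices mod `m`), yields `a_{ik} = α_k (e_i − Σ_{j=1}^{k−1} e_{i⊕j}) + β_k e_{i⊕k}` with
`α_k = 1/√(k+k²)`, `β_k = √(k/(k+1))`. -/
theorem gramSchmidt_explicit_form (m : ℕ) [NeZero m] (hm : 2 ≤ m) (i : Fin m)
    (f : Fin (m - 1) → EuclideanSpace ℝ (Fin m))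
    (hf : ∀ k : Fin (m - 1),
      f k = (Real.sqrt 2)⁻¹ • (canE m i + canE m (i + (((k : ℕ) + 1 : ℕ) : Fin m))))
    (k : Fin (m - 1)) :
    InnerProductSpace.gramSchmidtNormed ℝ f k =
      (Real.sqrt (((k : ℕ) + 1) + ((k : ℕ) + 1) ^ 2))⁻¹ •
          (canE m i - ∑ j ∈ Finset.range (k : ℕ), canE m (i + ((j + 1 : ℕ) : Fin m)))
        + Real.sqrt ((((k : ℕ) + 1 : ℕ)) / (((k : ℕ) + 2 : ℕ))) •
          canE m (i + (((k : ℕ) + 1 : ℕ) : Fin m)) :=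
  gramSchmidt_explicit_form_general m i f hf k
end

section
/- For every even integer m = 2r ≥ 2, there exists a real m × m(m+1) matrix h satisfying the ROCN conditions (pairwise orthogonal nonzero rows, unit-norm columns) whose columns form a symmetric spanning set of ℂ^m, i.e., the tensor squares of its columns span the m(m+1)/2-dimensional symmetric subspace S(ℂ^m ⊗ ℂ^m). -/
/-!
The columns are the standard basis vectors `e_a` of `ℝ^m`, each taken twice, and for every
ordered pair `a ≠ b` the vector `(e_a + s e_b)/√2`, where the sign `s = ±1` flips when `a` and `b`
are swapped; so each unordered pair `{a, b}` contributes `(e_a + e_b)/√2` and `±(e_a - e_b)/√2`.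
These have unit norm, and in `∑_c c_i c_k` the cross terms of the two vectors of each pair cancel,
so the rows are orthogonal. Their tensor squares span the symmetric subspace by polarization:
`(x + y) ⊗ (x + y) - (x - y) ⊗ (x - y) = 2 (x ⊗ y + y ⊗ x)`.
-/

open TensorProduct Finset

/-- The symmetrization projector on `V ⊗ V`, sending `u ⊗ v` to `(u ⊗ v + v ⊗ u)/2`. -/
noncomputable def symmProj (𝕜 V : Type*) [Field 𝕜] [AddCommGroup V] [Module 𝕜 V] :
    V ⊗[𝕜] V →ₗ[𝕜] V ⊗[𝕜] V :=
  (2 : 𝕜)⁻¹ • (LinearMap.id + (TensorProduct.comm 𝕜 V V).toLinearMap)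

section SymmetricTensors

variable {𝕜 V : Type*} [Field 𝕜] [AddCommGroup V] [Module 𝕜 V]

theorem symmProj_tmul (u v : V) :
    symmProj 𝕜 V (u ⊗ₜ v) = (2 : 𝕜)⁻¹ • (u ⊗ₜ v + v ⊗ₜ u) := rfl

theorem symmProj_tmul_self [NeZero (2 : 𝕜)] (v : V) : symmProj 𝕜 V (v ⊗ₜ v) = v ⊗ₜ v := by
  rw [symmProj_tmul, ← two_smul 𝕜, smul_smul, inv_mul_cancel₀ two_ne_zero, one_smul]

theorem range_symmProj_le_span_basis {ι : Type*} (b : Module.Basis ι 𝕜 V) :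
    LinearMap.range (symmProj 𝕜 V) ≤
      Submodule.span 𝕜 (Set.range fun p : ι × ι => b p.1 ⊗ₜ b p.2 + b p.2 ⊗ₜ b p.1) := by
  rw [LinearMap.range_eq_map, ← (b.tensorProduct b).span_eq, Submodule.map_span,
    Submodule.span_le]
  rintro _ ⟨_, ⟨p, rfl⟩, rfl⟩
  rw [Module.Basis.tensorProduct_apply, symmProj_tmul]
  exact Submodule.smul_mem _ _ (Submodule.subset_span ⟨p, rfl⟩)

theorem tmul_self_sub_tmul_self {s : 𝕜} (hs : s * s = 1) (x y : V) :
    (x + s • y) ⊗ₜ[𝕜] (x + s • y) - (y - s • x) ⊗ₜ[𝕜] (y - s • x) =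
      (2 * s) • (x ⊗ₜ y + y ⊗ₜ x) := by
  simp only [add_tmul, tmul_add, sub_tmul, tmul_sub, tmul_smul, ← smul_tmul']
  linear_combination (norm := module) -(hs • (x ⊗ₜ[𝕜] x - y ⊗ₜ[𝕜] y))

end SymmetricTensors

namespace Rocn

variable {𝕜 : Type*} [Field 𝕜] {m : ℕ}

def pairSign (a b : Fin m) : 𝕜 := if a < b then 1 else -1

theorem pairSign_mul_self (a b : Fin m) : pairSign a b * pairSign a b = (1 : 𝕜) := by
  unfold pairSign; split_ifs <;> norm_num

theorem pairSign_swap {a b : Fin m} (h : a ≠ b) : pairSign b a = -(pairSign a b : 𝕜) := by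
  unfold pairSign
  rcases h.lt_or_gt with h | h <;> simp [h, h.not_gt]

noncomputable def col (σ : 𝕜) : Fin m × Fin m ⊕ Fin m → Fin m → 𝕜
  | .inl (a, b) =>
    if a = b then Pi.single a 1 else σ • (Pi.single a 1 + Pi.single b (pairSign a b))
  | .inr a => Pi.single a 1

theorem col_inl_of_ne (σ : 𝕜) {a b : Fin m} (h : a ≠ b) :
    col σ (.inl (a, b)) = σ • (Pi.single a 1 + Pi.single b (pairSign a b)) :=
  if_neg h

theorem single_eq_smul_single_one (a : Fin m) (s : 𝕜) :
    (Pi.single a s : Fin m → 𝕜) = s • Pi.single a 1 := by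
  rw [← Pi.single_smul', smul_eq_mul, mul_one]

theorem map_col {𝕜' : Type*} [Field 𝕜'] (f : 𝕜 →+* 𝕜') (σ : 𝕜) (c : Fin m × Fin m ⊕ Fin m) :
    (fun i => f (col σ c i)) = col (f σ) c := by
  funext i
  rcases c with ⟨a, b⟩ | a
  · by_cases h : a = b
    · simp [col, h, Pi.single_apply, apply_ite f]
    · simp [col, h, Pi.single_apply, apply_ite f, pairSign]
  · simp [col, Pi.single_apply, apply_ite f]

theorem sum_sq_col {σ : 𝕜} (hσ : 2 * (σ * σ) = 1) (c : Fin m × Fin m ⊕ Fin m) :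
    ∑ i, col σ c i ^ 2 = 1 := by
  rcases c with ⟨a, b⟩ | a
  · by_cases h : a = b
    · simp [col, h, Pi.single_apply]
    · rw [Fintype.sum_eq_add a b h]
      · simp only [col_inl_of_ne σ h, Pi.smul_apply, Pi.add_apply, Pi.single_eq_same,
          Pi.single_eq_of_ne h, Pi.single_eq_of_ne (Ne.symm h), add_zero, zero_add, smul_eq_mul,
          mul_one]
        linear_combination hσ + σ ^ 2 * pairSign_mul_self (𝕜 := 𝕜) a b
      · rintro i ⟨hia, hib⟩
        simp [col_inl_of_ne σ h, hia, hib]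
  · simp [col, Pi.single_apply]

theorem sum_col_mul_col_of_ne (σ : 𝕜) {i k : Fin m} (hik : i ≠ k) :
    ∑ c, col σ c i * col σ c k = 0 := by
  have hsingle (a : Fin m) : (Pi.single a 1 : Fin m → 𝕜) i * (Pi.single a 1 : Fin m → 𝕜) k = 0 := by
    by_cases hia : i = a
    · simp [hia, Ne.symm (hia ▸ hik)]
    · simp [hia]
  have hdiag : ∀ a, col σ (.inl (a, a)) i * col σ (.inl (a, a)) k = 0 := by
    simp [col, hsingle]
  have hpair : ∀ p : Fin m × Fin m,
      col σ (.inl p) i * col σ (.inl p) k + col σ (.inl p.swap) i * col σ (.inl p.swap) k = 0 := by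
    rintro ⟨a, b⟩
    by_cases hab : a = b
    · subst hab
      simp only [Prod.swap_prod_mk, hdiag, add_zero]
    · simp only [Prod.swap_prod_mk, col_inl_of_ne σ hab, col_inl_of_ne σ (Ne.symm hab),
        pairSign_swap hab, single_eq_smul_single_one _ (pairSign a b : 𝕜),
        single_eq_smul_single_one _ (-pairSign a b : 𝕜), Pi.smul_apply, Pi.add_apply, smul_eq_mul]
      linear_combination σ ^ 2 * (1 + pairSign a b ^ 2) * (hsingle a + hsingle b)
  have hoff : ∑ p : Fin m × Fin m, col σ (.inl p) i * col σ (.inl p) k = 0 := by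
    refine sum_ninvolution Prod.swap hpair ?_ (fun _ => mem_univ _) Prod.swap_swap
    rintro ⟨a, b⟩ hne heq
    obtain rfl : b = a := congrArg Prod.fst heq
    exact hne (hdiag b)
  rw [Fintype.sum_sum_type, hoff]
  simp [col, hsingle]

theorem tmul_add_tmul_comm_single_mem_span [NeZero (2 : 𝕜)] {σ : 𝕜} (hσ : σ ≠ 0) (a b : Fin m) :
    (Pi.single a 1 ⊗ₜ[𝕜] Pi.single b 1 + Pi.single b 1 ⊗ₜ[𝕜] Pi.single a 1 :
        (Fin m → 𝕜) ⊗[𝕜] (Fin m → 𝕜)) ∈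
      Submodule.span 𝕜 (Set.range fun c => col σ c ⊗ₜ[𝕜] col σ c) := by
  set W := Submodule.span 𝕜 (Set.range fun c => col σ c ⊗ₜ[𝕜] col σ c)
  have hcol : ∀ c, col σ c ⊗ₜ[𝕜] col σ c ∈ W := fun c => Submodule.subset_span ⟨c, rfl⟩
  by_cases hab : a = b
  · rw [hab, ← two_smul 𝕜]
    exact W.smul_mem _ (hcol (.inr b))
  have hs : (pairSign a b : 𝕜) * pairSign a b = 1 := pairSign_mul_self a b
  have hplus : Pi.single a 1 + (pairSign a b : 𝕜) • Pi.single b 1 =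
      σ⁻¹ • col σ (.inl (a, b)) := by
    rw [col_inl_of_ne σ hab, single_eq_smul_single_one b (pairSign a b), inv_smul_smul₀ hσ]
  have hminus : Pi.single b 1 - (pairSign a b : 𝕜) • Pi.single a 1 =
      σ⁻¹ • col σ (.inl (b, a)) := by
    rw [col_inl_of_ne σ (Ne.symm hab), pairSign_swap hab,
      single_eq_smul_single_one a (-pairSign a b), neg_smul, ← sub_eq_add_neg, inv_smul_smul₀ hσ]
  have h2s : 2 * (pairSign a b : 𝕜) ≠ 0 := mul_ne_zero two_ne_zero (left_ne_zero_of_mul_eq_one hs)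
  refine (W.smul_mem_iff h2s).1 ?_
  rw [← tmul_self_sub_tmul_self hs, hplus, hminus, smul_tmul_smul, smul_tmul_smul]
  exact W.sub_mem (W.smul_mem _ (hcol _)) (W.smul_mem _ (hcol _))

theorem span_range_col_tmul_self [NeZero (2 : 𝕜)] {σ : 𝕜} (hσ : σ ≠ 0) :
    Submodule.span 𝕜 (Set.range fun c => col σ c ⊗ₜ[𝕜] col σ c) =
      LinearMap.range (symmProj 𝕜 (Fin m → 𝕜)) := by
  refine le_antisymm (Submodule.span_le.2 ?_) ?_
  · rintro _ ⟨c, rfl⟩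
    exact ⟨_, symmProj_tmul_self _⟩
  · refine (range_symmProj_le_span_basis (Pi.basisFun 𝕜 (Fin m))).trans (Submodule.span_le.2 ?_)
    rintro _ ⟨⟨a, b⟩, rfl⟩
    simpa only [Pi.basisFun_apply, SetLike.mem_coe] using
      tmul_add_tmul_comm_single_mem_span hσ a b

end Rocn

open Rocn in
theorem exists_rocn_symmetric_spanning_general (r : ℕ) :
    ∃ h : Matrix (Fin (2 * r)) (Fin (2 * r * (2 * r + 1))) ℝ,
      (∀ i k, ∑ j, h i j * h k j = if i = k then ∑ j, (h i j) ^ 2 else 0) ∧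
      (∀ i, ∃ j, h i j ≠ 0) ∧
      (∀ j, ∑ i, (h i j) ^ 2 = 1) ∧
      Submodule.span ℂ
          (Set.range fun j : Fin (2 * r * (2 * r + 1)) =>
            (fun i => (h i j : ℂ)) ⊗ₜ[ℂ] (fun i => (h i j : ℂ))) =
        LinearMap.range (symmProj ℂ (Fin (2 * r) → ℂ)) := by
  let e : Fin (2 * r * (2 * r + 1)) ≃ Fin (2 * r) × Fin (2 * r) ⊕ Fin (2 * r) :=
    Fintype.equivOfCardEq <| by
      simp only [Fintype.card_sum, Fintype.card_prod, Fintype.card_fin]; ring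
  let σ : ℝ := (√2)⁻¹
  have hσ : 2 * (σ * σ) = 1 := by
    rw [← mul_inv, Real.mul_self_sqrt zero_le_two, mul_inv_cancel₀ two_ne_zero]
  refine ⟨Matrix.of fun i j => col σ (e j) i, fun i k => ?_, fun i => ⟨e.symm (.inr i), ?_⟩,
    fun j => sum_sq_col hσ (e j), ?_⟩
  · split_ifs with hik
    · simp only [hik, sq]
    · simp only [Matrix.of_apply]
      rw [e.sum_comp fun c => col σ c i * col σ c k]
      exact sum_col_mul_col_of_ne σ hik
  · simp [col]
  · have hcols : ∀ c : Fin (2 * r) × Fin (2 * r) ⊕ Fin (2 * r),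
        (fun i => ((col σ c i : ℝ) : ℂ)) = col (σ : ℂ) c :=
      map_col Complex.ofRealHom σ
    simp only [Matrix.of_apply, hcols]
    have hσ0 : (σ : ℂ) ≠ 0 := Complex.ofReal_ne_zero.2 (inv_ne_zero (by positivity))
    rw [← span_range_col_tmul_self hσ0, ← e.surjective.range_comp]
    rfl

/-- For every even `m = 2r ≥ 2` there is a real `m × m(m+1)` ROCN matrix (pairwise
orthogonal nonzero rows, unit-norm columns) whose columns form a symmetric spanning set
of `ℂ^m`: the tensor squares of its columns span the symmetric subspace. -/
theorem exists_rocn_symmetric_spanning (r : ℕ) (hr : 1 ≤ r) :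
    ∃ h : Matrix (Fin (2 * r)) (Fin (2 * r * (2 * r + 1))) ℝ,
      (∀ i k, ∑ j, h i j * h k j = if i = k then ∑ j, (h i j) ^ 2 else 0) ∧
      (∀ i, ∃ j, h i j ≠ 0) ∧
      (∀ j, ∑ i, (h i j) ^ 2 = 1) ∧
      Submodule.span ℂ
          (Set.range fun j : Fin (2 * r * (2 * r + 1)) =>
            (fun i => (h i j : ℂ)) ⊗ₜ[ℂ] (fun i => (h i j : ℂ))) =
        LinearMap.range (symmProj ℂ (Fin (2 * r) → ℂ)) :=
  exists_rocn_symmetric_spanning_general r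
end

section
/- Let {A_i}_{i=1}^m be pairwise anticommuting self-adjoint involutions on ℂ^d ({A_i,A_k} = 2δ_{ik}I), h an m×n ROCN matrix, B_j = Σ_i h_{ij}A_i^T, and |Φ_d⟩ = (1/√d)Σ_{i=1}^d |i⟩⊗|i⟩ the maximally entangled state. Then ⟨Φ_d| Σ_{j=1}^n Σ_{i=1}^m h_{ij} (A_i ⊗ B_j) |Φ_d⟩ = n. -/
open Finset Matrix Kronecker

/-!
Expanding by linearity, the Bell value is `Σ_{i,j} h_{ij} ⟨Φ_d| A_i ⊗ B_j |Φ_d⟩`, and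
`⟨Φ_d| X ⊗ Y |Φ_d⟩ = (1/d) Tr(X Yᵀ)`. Since `B_jᵀ = Σ_k h_{kj} A_k` and the anticommutation
relations give `Tr(A_i A_k) = d δ_{ik}`, each term is `h_{ij}²`, and the normalized columns sum
to `n`.
-/

/-- The maximally entangled state `|Φ_d⟩ = (1/√d) Σ_i |i⟩⊗|i⟩` as a vector of
`ℂ^d ⊗ ℂ^d ≅ ℂ^(d×d)`. -/
noncomputable def maxEnt (d : ℕ) : Fin d × Fin d → ℂ :=
  fun p => ((Real.sqrt d : ℝ) : ℂ)⁻¹ * (if p.1 = p.2 then 1 else 0)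

lemma maxEnt_dotProduct_kronecker_mulVec (d : ℕ) (X Y : Matrix (Fin d) (Fin d) ℂ) :
    star (maxEnt d) ⬝ᵥ (X ⊗ₖ Y) *ᵥ maxEnt d = (d : ℂ)⁻¹ * (X * Yᵀ).trace := by
  have hnorm : star ((Real.sqrt d : ℂ)⁻¹) * (Real.sqrt d : ℂ)⁻¹ = (d : ℂ)⁻¹ := by
    rw [Complex.star_def, map_inv₀, Complex.conj_ofReal, ← mul_inv, ← Complex.ofReal_mul,
      Real.mul_self_sqrt (Nat.cast_nonneg d), Complex.ofReal_natCast]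
  simp only [dotProduct, mulVec, maxEnt, Pi.star_apply, kroneckerMap_apply, trace,
    Matrix.diag, mul_apply, transpose_apply, Fintype.sum_prod_type, apply_ite star, star_zero,
    mul_ite, ite_mul, mul_one, mul_zero, zero_mul, sum_ite_eq, mem_univ, if_true, mul_sum,
    sum_ite_irrel, sum_const_zero]
  refine sum_congr rfl fun a _ => sum_congr rfl fun b _ => ?_
  rw [← hnorm]
  ring

section Anticommuting

variable {K ι κ : Type*} [Field K] [NeZero (2 : K)] [Fintype ι] [DecidableEq ι]
  [DecidableEq κ] {A : κ → Matrix ι ι K}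

lemma trace_mul_of_anticommute
    (hAC : ∀ i k, A i * A k + A k * A i = if i = k then (2 : K) • 1 else 0) (i k : κ) :
    (A i * A k).trace = if i = k then (Fintype.card ι : K) else 0 := by
  have htr := congrArg trace (hAC i k)
  rw [trace_add, trace_mul_comm (A k), ← two_mul] at htr
  split_ifs at htr ⊢
  · rw [trace_smul, trace_one, smul_eq_mul] at htr
    exact mul_left_cancel₀ two_ne_zero htr
  · rw [trace_zero] at htr
    exact (mul_eq_zero.mp htr).resolve_left two_ne_zero

lemma trace_mul_sum_smul_of_anticommute [Fintype κ]
    (hAC : ∀ i k, A i * A k + A k * A i = if i = k then (2 : K) • 1 else 0)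
    (c : κ → K) (i : κ) :
    (A i * ∑ k, c k • A k).trace = Fintype.card ι * c i := by
  simp only [mul_sum, Matrix.mul_smul, trace_sum, trace_smul, trace_mul_of_anticommute hAC,
    smul_eq_mul, mul_ite, mul_zero, sum_ite_eq, mem_univ, if_true, mul_comm]

end Anticommuting

theorem bell_value_on_maximally_entangled_general (m n d : ℕ) (hd : 0 < d)
    (A : Fin m → Matrix (Fin d) (Fin d) ℂ)
    (hAC : ∀ i k, A i * A k + A k * A i = if i = k then (2 : ℂ) • 1 else 0)
    (h : Matrix (Fin m) (Fin n) ℝ)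
    (hcol : ∀ j : Fin n, ∑ i, (h i j) ^ 2 = 1)
    (B : Fin n → Matrix (Fin d) (Fin d) ℂ)
    (hB : ∀ j, B j = ∑ i, (h i j : ℂ) • (A i)ᵀ) :
    star (maxEnt d) ⬝ᵥ
        ((∑ j, ∑ i, (h i j : ℂ) • (A i ⊗ₖ B j)).mulVec (maxEnt d)) = (n : ℂ) := by
  have hd_ne : (d : ℂ) ≠ 0 := Nat.cast_ne_zero.mpr hd.ne'
  have hBt : ∀ j, (B j)ᵀ = ∑ k, (h k j : ℂ) • A k := by
    simp [hB, transpose_sum, transpose_smul]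
  have hcol_complex : ∀ j, ∑ i, (h i j : ℂ) ^ 2 = 1 := fun j => by exact_mod_cast hcol j
  calc star (maxEnt d) ⬝ᵥ (∑ j, ∑ i, (h i j : ℂ) • (A i ⊗ₖ B j)) *ᵥ maxEnt d
      = ∑ j, ∑ i, (h i j : ℂ) * ((d : ℂ)⁻¹ * (A i * (B j)ᵀ).trace) := by
        simp only [sum_mulVec, dotProduct_sum, smul_mulVec, dotProduct_smul, smul_eq_mul,
          maxEnt_dotProduct_kronecker_mulVec]
    _ = ∑ j, ∑ i, (h i j : ℂ) ^ 2 := by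
        simp only [hBt, trace_mul_sum_smul_of_anticommute hAC, Fintype.card_fin,
          inv_mul_cancel_left₀ hd_ne, sq]
    _ = n := by simp [hcol_complex]

/-- For pairwise anticommuting self-adjoint involutions `A_i` on `ℂ^d`, an `m×n` ROCN
matrix `h`, and `B_j = Σ_i h_{ij} A_iᵀ`, the Bell operator
`Σ_{ij} h_{ij} A_i ⊗ B_j` has expectation value `n` on the maximally entangled state
`|Φ_d⟩`. -/
theorem bell_value_on_maximally_entangled (m n d : ℕ) (hd : 0 < d) (hmn : m ≤ n)
    (A : Fin m → Matrix (Fin d) (Fin d) ℂ)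
    (hA : ∀ i, (A i).IsHermitian)
    (hAC : ∀ i k, A i * A k + A k * A i = if i = k then (2 : ℂ) • 1 else 0)
    (h : Matrix (Fin m) (Fin n) ℝ)
    (hrow : ∀ i k : Fin m, ∑ j, h i j * h k j =
      if i = k then ∑ j, (h i j) ^ 2 else 0)
    (hne : ∀ i : Fin m, ∃ j, h i j ≠ 0)
    (hcol : ∀ j : Fin n, ∑ i, (h i j) ^ 2 = 1)
    (B : Fin n → Matrix (Fin d) (Fin d) ℂ)
    (hB : ∀ j, B j = ∑ i, (h i j : ℂ) • (A i)ᵀ) :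
    star (maxEnt d) ⬝ᵥ
        ((∑ j, ∑ i, (h i j : ℂ) • (A i ⊗ₖ B j)).mulVec (maxEnt d)) = (n : ℂ) :=
  bell_value_on_maximally_entangled_general m n d hd A hAC h hcol B hB
end
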